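/- Assume the sign conditions hold, the kernel condition holds, and that the pair (Q − L R⁻¹ Lᵀ, A) is detectable. Let X̃, X_* ∈ ℝ^{n×n} be symmetric with 0 ⪯ X̃ ⪯ X_* and 𝓡(X_*) = 0. Then the matrix A_c(X̃) − G_c(X̃) X_* is stable. -/

import Mathlib

open Matrix Filter

noncomputable section

/-- `Π₁₁(X) = Σᵢ (A₀ⁱ)ᵀ X A₀ⁱ`. -/
def Pi11 {n r : ℕ} (A0 : Fin r → Matrix (Fin n) (Fin n) ℝ)
    (X : Matrix (Fin n) (Fin n) ℝ) : Matrix (Fin n) (Fin n) ℝ :=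
  ∑ i, (A0 i)ᵀ * X * A0 i

/-- `Π₁₂(X) = Σᵢ (A₀ⁱ)ᵀ X B₀ⁱ`. -/
def Pi12 {n m r : ℕ} (A0 : Fin r → Matrix (Fin n) (Fin n) ℝ)
    (B0 : Fin r → Matrix (Fin n) (Fin m) ℝ)
    (X : Matrix (Fin n) (Fin n) ℝ) : Matrix (Fin n) (Fin m) ℝ :=
  ∑ i, (A0 i)ᵀ * X * B0 i

/-- `Π₂₂(X) = Σᵢ (B₀ⁱ)ᵀ X B₀ⁱ`. -/
def Pi22 {n m r : ℕ} (B0 : Fin r → Matrix (Fin n) (Fin m) ℝ)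
    (X : Matrix (Fin n) (Fin n) ℝ) : Matrix (Fin m) (Fin m) ℝ :=
  ∑ i, (B0 i)ᵀ * X * B0 i

/-- The block matrix `Π(X) = [Π₁₁(X), Π₁₂(X); Π₁₂(X)ᵀ, Π₂₂(X)]`. -/
def PiBlock {n m r : ℕ} (A0 : Fin r → Matrix (Fin n) (Fin n) ℝ)
    (B0 : Fin r → Matrix (Fin n) (Fin m) ℝ)
    (X : Matrix (Fin n) (Fin n) ℝ) : Matrix (Fin n ⊕ Fin m) (Fin n ⊕ Fin m) ℝ :=
  fromBlocks (Pi11 A0 X) (Pi12 A0 B0 X) (Pi12 A0 B0 X)ᵀ (Pi22 B0 X)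

/-- `L_c(X) = L + Π₁₂(X)`. -/
def Lc {n m r : ℕ} (L : Matrix (Fin n) (Fin m) ℝ)
    (A0 : Fin r → Matrix (Fin n) (Fin n) ℝ) (B0 : Fin r → Matrix (Fin n) (Fin m) ℝ)
    (X : Matrix (Fin n) (Fin n) ℝ) : Matrix (Fin n) (Fin m) ℝ :=
  L + Pi12 A0 B0 X

/-- `R_c(X) = R + Π₂₂(X)`. -/
def Rc {n m r : ℕ} (R : Matrix (Fin m) (Fin m) ℝ)
    (B0 : Fin r → Matrix (Fin n) (Fin m) ℝ)
    (X : Matrix (Fin n) (Fin n) ℝ) : Matrix (Fin m) (Fin m) ℝ :=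
  R + Pi22 B0 X

/-- `Q_c(X) = Q + Π₁₁(X)`. -/
def Qc {n r : ℕ} (Q : Matrix (Fin n) (Fin n) ℝ)
    (A0 : Fin r → Matrix (Fin n) (Fin n) ℝ)
    (X : Matrix (Fin n) (Fin n) ℝ) : Matrix (Fin n) (Fin n) ℝ :=
  Q + Pi11 A0 X

/-- `A_c(X) = A − B R_c(X)⁻¹ L_c(X)ᵀ`. -/
def Ac {n m r : ℕ} (A : Matrix (Fin n) (Fin n) ℝ) (B : Matrix (Fin n) (Fin m) ℝ)
    (L : Matrix (Fin n) (Fin m) ℝ) (R : Matrix (Fin m) (Fin m) ℝ)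
    (A0 : Fin r → Matrix (Fin n) (Fin n) ℝ) (B0 : Fin r → Matrix (Fin n) (Fin m) ℝ)
    (X : Matrix (Fin n) (Fin n) ℝ) : Matrix (Fin n) (Fin n) ℝ :=
  A - B * (Rc R B0 X)⁻¹ * (Lc L A0 B0 X)ᵀ

/-- `G_c(X) = B R_c(X)⁻¹ Bᵀ`. -/
def Gc {n m r : ℕ} (B : Matrix (Fin n) (Fin m) ℝ) (R : Matrix (Fin m) (Fin m) ℝ)
    (B0 : Fin r → Matrix (Fin n) (Fin m) ℝ)
    (X : Matrix (Fin n) (Fin n) ℝ) : Matrix (Fin n) (Fin n) ℝ :=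
  B * (Rc R B0 X)⁻¹ * Bᵀ

/-- `H_c(X) = Q_c(X) − L_c(X) R_c(X)⁻¹ L_c(X)ᵀ`. -/
def Hc {n m r : ℕ} (Q : Matrix (Fin n) (Fin n) ℝ) (L : Matrix (Fin n) (Fin m) ℝ)
    (R : Matrix (Fin m) (Fin m) ℝ)
    (A0 : Fin r → Matrix (Fin n) (Fin n) ℝ) (B0 : Fin r → Matrix (Fin n) (Fin m) ℝ)
    (X : Matrix (Fin n) (Fin n) ℝ) : Matrix (Fin n) (Fin n) ℝ :=
  Qc Q A0 X - Lc L A0 B0 X * (Rc R B0 X)⁻¹ * (Lc L A0 B0 X)ᵀ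

/-- The SCARE residual
`𝓡(X) = AᵀX + XA + Q_c(X) − (XB + L_c(X)) R_c(X)⁻¹ (XB + L_c(X))ᵀ`. -/
def scareRes {n m r : ℕ} (A : Matrix (Fin n) (Fin n) ℝ) (B : Matrix (Fin n) (Fin m) ℝ)
    (Q : Matrix (Fin n) (Fin n) ℝ) (L : Matrix (Fin n) (Fin m) ℝ)
    (R : Matrix (Fin m) (Fin m) ℝ)
    (A0 : Fin r → Matrix (Fin n) (Fin n) ℝ) (B0 : Fin r → Matrix (Fin n) (Fin m) ℝ)
    (X : Matrix (Fin n) (Fin n) ℝ) : Matrix (Fin n) (Fin n) ℝ :=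
  Aᵀ * X + X * A + Qc Q A0 X -
    (X * B + Lc L A0 B0 X) * (Rc R B0 X)⁻¹ * (X * B + Lc L A0 B0 X)ᵀ

/-- `Ω(X) = [−G_c(X), −A_c(X); −A_c(X)ᵀ, H_c(X)]`. -/
def Omega {n m r : ℕ} (A : Matrix (Fin n) (Fin n) ℝ) (B : Matrix (Fin n) (Fin m) ℝ)
    (Q : Matrix (Fin n) (Fin n) ℝ) (L : Matrix (Fin n) (Fin m) ℝ)
    (R : Matrix (Fin m) (Fin m) ℝ)
    (A0 : Fin r → Matrix (Fin n) (Fin n) ℝ) (B0 : Fin r → Matrix (Fin n) (Fin m) ℝ)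
    (X : Matrix (Fin n) (Fin n) ℝ) : Matrix (Fin n ⊕ Fin n) (Fin n ⊕ Fin n) ℝ :=
  fromBlocks (-(Gc B R B0 X)) (-(Ac A B L R A0 B0 X)) (-(Ac A B L R A0 B0 X))ᵀ
    (Hc Q L R A0 B0 X)

/-- The `2n×n` matrix `[X; −Iₙ]` stacking `X` over `−Iₙ`. -/
def stackNegI {n : ℕ} (X : Matrix (Fin n) (Fin n) ℝ) :
    Matrix (Fin n ⊕ Fin n) (Fin n) ℝ :=
  fromRows X (-1)

/-- The pair `(A, B)` is stabilizable: `yᴴ(A − λI) = 0`, `yᴴB = 0`, `Re λ ≥ 0` imply `y = 0`. -/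
def Stabilizable {n m : ℕ} (A : Matrix (Fin n) (Fin n) ℝ)
    (B : Matrix (Fin n) (Fin m) ℝ) : Prop :=
  ∀ (lam : ℂ) (y : Fin n → ℂ), 0 ≤ lam.re →
    vecMul (star y) (A.map Complex.ofReal - lam • 1) = 0 →
    vecMul (star y) (B.map Complex.ofReal) = 0 → y = 0

/-- The pair `(C, A)` is detectable: `(A − λI)z = 0`, `Cz = 0`, `Re λ ≥ 0` imply `z = 0`. -/
def Detectable {p n : ℕ} (C : Matrix (Fin p) (Fin n) ℝ)
    (A : Matrix (Fin n) (Fin n) ℝ) : Prop :=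
  ∀ (lam : ℂ) (z : Fin n → ℂ), 0 ≤ lam.re →
    mulVec (A.map Complex.ofReal - lam • 1) z = 0 →
    mulVec (C.map Complex.ofReal) z = 0 → z = 0

/-- A real square matrix is stable if all its (complex) eigenvalues have negative real part. -/
def IsStableMatrix {n : ℕ} (M : Matrix (Fin n) (Fin n) ℝ) : Prop :=
  ∀ μ ∈ spectrum ℂ (M.map Complex.ofReal), μ.re < 0

/-- Kernel condition: `(Q − LR⁻¹Lᵀ)z = 0` implies `Lᵀz = 0` and `A₀ⁱ z = 0` for all `i`. -/
def KernelCondition {n m r : ℕ} (Q : Matrix (Fin n) (Fin n) ℝ)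
    (L : Matrix (Fin n) (Fin m) ℝ) (R : Matrix (Fin m) (Fin m) ℝ)
    (A0 : Fin r → Matrix (Fin n) (Fin n) ℝ) : Prop :=
  ∀ z : Fin n → ℂ,
    mulVec ((Q - L * R⁻¹ * Lᵀ).map Complex.ofReal) z = 0 →
    mulVec (Lᵀ.map Complex.ofReal) z = 0 ∧
      ∀ i, mulVec ((A0 i).map Complex.ofReal) z = 0

/-- `Γ(X) = [[0, −A, −B], [−Aᵀ, Q_c(X), L_c(X)], [−Bᵀ, L_c(X)ᵀ, R_c(X)]]`. -/
def Gamma {n m r : ℕ} (A : Matrix (Fin n) (Fin n) ℝ) (B : Matrix (Fin n) (Fin m) ℝ)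
    (Q : Matrix (Fin n) (Fin n) ℝ) (L : Matrix (Fin n) (Fin m) ℝ)
    (R : Matrix (Fin m) (Fin m) ℝ)
    (A0 : Fin r → Matrix (Fin n) (Fin n) ℝ) (B0 : Fin r → Matrix (Fin n) (Fin m) ℝ)
    (X : Matrix (Fin n) (Fin n) ℝ) :
    Matrix ((Fin n ⊕ Fin n) ⊕ Fin m) ((Fin n ⊕ Fin n) ⊕ Fin m) ℝ :=
  fromBlocks (fromBlocks 0 (-A) (-Aᵀ) (Qc Q A0 X))
    (fromRows (-B) (Lc L A0 B0 X))
    (fromRows (-B) (Lc L A0 B0 X))ᵀ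
    (Rc R B0 X)

/-- `F_W(Y) = [Y; −Iₙ]ᵀ (Ω(Y) − Ω(W)) [Y; −Iₙ]`. -/
def FW {n m r : ℕ} (A : Matrix (Fin n) (Fin n) ℝ) (B : Matrix (Fin n) (Fin m) ℝ)
    (Q : Matrix (Fin n) (Fin n) ℝ) (L : Matrix (Fin n) (Fin m) ℝ)
    (R : Matrix (Fin m) (Fin m) ℝ)
    (A0 : Fin r → Matrix (Fin n) (Fin n) ℝ) (B0 : Fin r → Matrix (Fin n) (Fin m) ℝ)
    (W Y : Matrix (Fin n) (Fin n) ℝ) : Matrix (Fin n) (Fin n) ℝ :=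
  (stackNegI Y)ᵀ * (Omega A B Q L R A0 B0 Y - Omega A B Q L R A0 B0 W) * stackNegI Y

/-- `𝓕_W(Z) = Kᵀ Π(Z) K` with `K = [−Iₙ; R_c(W)⁻¹ (L_c(W) + W B)ᵀ]`. -/
def Fcal {n m r : ℕ} (B : Matrix (Fin n) (Fin m) ℝ)
    (L : Matrix (Fin n) (Fin m) ℝ) (R : Matrix (Fin m) (Fin m) ℝ)
    (A0 : Fin r → Matrix (Fin n) (Fin n) ℝ) (B0 : Fin r → Matrix (Fin n) (Fin m) ℝ)
    (W Z : Matrix (Fin n) (Fin n) ℝ) : Matrix (Fin n) (Fin n) ℝ :=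
  (fromRows (-1 : Matrix (Fin n) (Fin n) ℝ)
      ((Rc R B0 W)⁻¹ * (Lc L A0 B0 W + W * B)ᵀ))ᵀ *
    PiBlock A0 B0 Z *
    fromRows (-1 : Matrix (Fin n) (Fin n) ℝ)
      ((Rc R B0 W)⁻¹ * (Lc L A0 B0 W + W * B)ᵀ)

/-!
Put `K = R_c(X̃)⁻¹ (L_c(X̃)ᵀ + Bᵀ X_*)`, so that `A_c(X̃) − G_c(X̃) X_* = A − B K`. Completing the
square in the gain (three times: at the optimal gain of `X_*`, at `K`, and at the optimal gain of
`X̃`) rewrites `𝓡(X_*) = 0` as a Lyapunov equation `(A − BK)ᵀ X_* + X_* (A − BK) + P = 0`, where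
`P = H_c(X̃) + X_* B R_c(X̃)⁻¹ Bᵀ X_* + (terms that are ⪰ 0 because X_* − X̃ ⪰ 0)`.
If `(A − BK) z = μ z` with `Re μ ≥ 0`, then `2 Re μ · z* X_* z + z* P z = 0` forces `P z = 0`.
Since `H_c(X̃) ⪰ Q − L R⁻¹ Lᵀ ⪰ 0`, this gives `(Q − L R⁻¹ Lᵀ) z = 0` and `Bᵀ X_* z = 0`; the kernel
condition then yields `K z = 0`, so `A z = μ z`, and detectability gives `z = 0`.
-/

open scoped ComplexOrder

section GainCost

variable {α ι κ : Type*} [CommRing α] [Fintype κ]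

/-- The quadratic form of `[S₁₁, S₁₂; S₁₂ᵀ, S₂₂]` along the columns of `[I; -K]`. -/
def gainCost (S₁₁ : Matrix ι ι α) (S₁₂ : Matrix ι κ α) (S₂₂ : Matrix κ κ α)
    (K : Matrix κ ι α) : Matrix ι ι α :=
  S₁₁ - S₁₂ * K - Kᵀ * S₁₂ᵀ + Kᵀ * S₂₂ * K

lemma gainCost_add (S₁₁ T₁₁ : Matrix ι ι α) (S₁₂ T₁₂ : Matrix ι κ α) (S₂₂ T₂₂ : Matrix κ κ α)
    (K : Matrix κ ι α) :
    gainCost (S₁₁ + T₁₁) (S₁₂ + T₁₂) (S₂₂ + T₂₂) K =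
      gainCost S₁₁ S₁₂ S₂₂ K + gainCost T₁₁ T₁₂ T₂₂ K := by
  simp only [gainCost, transpose_add, Matrix.add_mul, Matrix.mul_add]
  abel

lemma gainCost_add_offDiag (S₁₁ : Matrix ι ι α) (E S₁₂ : Matrix ι κ α) (S₂₂ : Matrix κ κ α)
    (K : Matrix κ ι α) :
    gainCost S₁₁ (E + S₁₂) S₂₂ K = gainCost S₁₁ S₁₂ S₂₂ K - E * K - Kᵀ * Eᵀ := by
  simp only [gainCost, transpose_add, Matrix.add_mul, Matrix.mul_add]
  abel

lemma gainCost_sum [Fintype ι] {τ : Type*} [Fintype τ] (C : τ → Matrix ι ι α)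
    (D : τ → Matrix ι κ α) {Z : Matrix ι ι α} (hZ : Zᵀ = Z) (K : Matrix κ ι α) :
    gainCost (∑ i, (C i)ᵀ * Z * C i) (∑ i, (C i)ᵀ * Z * D i) (∑ i, (D i)ᵀ * Z * D i) K =
      ∑ i, (C i - D i * K)ᵀ * Z * (C i - D i * K) := by
  simp only [gainCost, transpose_sum, Matrix.sum_mul, Matrix.mul_sum, ← Finset.sum_sub_distrib,
    ← Finset.sum_add_distrib]
  refine Finset.sum_congr rfl fun i _ => ?_
  simp only [transpose_mul, transpose_transpose, transpose_sub, hZ, Matrix.mul_sub,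
    Matrix.sub_mul, Matrix.mul_assoc]
  abel

lemma gainCost_of_mul_eq {S₁₁ : Matrix ι ι α} {S₁₂ : Matrix ι κ α} {S₂₂ : Matrix κ κ α}
    {K : Matrix κ ι α} (hK : S₂₂ * K = S₁₂ᵀ) : gainCost S₁₁ S₁₂ S₂₂ K = S₁₁ - S₁₂ * K := by
  rw [gainCost, Matrix.mul_assoc Kᵀ, hK, sub_add_cancel]

lemma gainCost_eq_add_of_mul_eq {S₁₁ : Matrix ι ι α} {S₁₂ : Matrix ι κ α}
    {S₂₂ : Matrix κ κ α} {K : Matrix κ ι α} (hS : S₂₂ᵀ = S₂₂) (hK : S₂₂ * K = S₁₂ᵀ)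
    (K' : Matrix κ ι α) :
    gainCost S₁₁ S₁₂ S₂₂ K' = gainCost S₁₁ S₁₂ S₂₂ K + (K' - K)ᵀ * S₂₂ * (K' - K) := by
  have hS₁₂ : S₁₂ = Kᵀ * S₂₂ := by rw [← hS, ← transpose_mul, hK, transpose_transpose]
  simp only [gainCost, hS₁₂, transpose_mul, transpose_transpose, hS, transpose_sub,
    Matrix.sub_mul, Matrix.mul_sub, Matrix.mul_assoc]
  abel

lemma gainCost_eq_schur_add {S₁₁ : Matrix ι ι α} {S₁₂ : Matrix ι κ α} {S₂₂ : Matrix κ κ α}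
    [DecidableEq κ] (hS : S₂₂ᵀ = S₂₂) (hS₂₂ : IsUnit S₂₂.det) {K F : Matrix κ ι α}
    (hK : S₂₂ * K = S₁₂ᵀ + F) :
    gainCost S₁₁ S₁₂ S₂₂ K = S₁₁ - S₁₂ * S₂₂⁻¹ * S₁₂ᵀ + Fᵀ * S₂₂⁻¹ * F := by
  have hK₀ : S₂₂ * (S₂₂⁻¹ * S₁₂ᵀ) = S₁₂ᵀ := mul_nonsing_inv_cancel_left _ _ hS₂₂
  have hdiff : K - S₂₂⁻¹ * S₁₂ᵀ = S₂₂⁻¹ * F := by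
    rw [← nonsing_inv_mul_cancel_left _ K hS₂₂, hK, Matrix.mul_add, add_sub_cancel_left]
  rw [gainCost_eq_add_of_mul_eq hS hK₀, gainCost_of_mul_eq hK₀, hdiff, transpose_mul,
    transpose_nonsing_inv, hS, Matrix.mul_assoc _ S₂₂, mul_nonsing_inv_cancel_left _ _ hS₂₂,
    ← Matrix.mul_assoc]

lemma closedLoop_add_gainCost [Fintype ι] (A X : Matrix ι ι α) (B : Matrix ι κ α)
    (S₁₁ : Matrix ι ι α) (S₁₂ : Matrix ι κ α) (S₂₂ : Matrix κ κ α) (K : Matrix κ ι α)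
    (hX : Xᵀ = X) :
    (A - B * K)ᵀ * X + X * (A - B * K) + gainCost S₁₁ S₁₂ S₂₂ K =
      Aᵀ * X + X * A + gainCost S₁₁ (X * B + S₁₂) S₂₂ K := by
  rw [gainCost_add_offDiag]
  simp only [transpose_sub, transpose_mul, hX, Matrix.sub_mul, Matrix.mul_sub, Matrix.mul_assoc]
  abel

end GainCost

namespace Matrix

variable {a b c : Type*}

@[simp] lemma map_ofReal_mul [Fintype b] (M : Matrix a b ℝ) (N : Matrix b c ℝ) :
    (M * N).map Complex.ofReal = M.map Complex.ofReal * N.map Complex.ofReal :=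
  Matrix.map_mul (f := Complex.ofRealHom)

@[simp] lemma map_ofReal_add (M N : Matrix a b ℝ) :
    (M + N).map Complex.ofReal = M.map Complex.ofReal + N.map Complex.ofReal :=
  Matrix.map_add _ Complex.ofReal_add M N

@[simp] lemma map_ofReal_sub (M N : Matrix a b ℝ) :
    (M - N).map Complex.ofReal = M.map Complex.ofReal - N.map Complex.ofReal :=
  Matrix.map_sub _ Complex.ofReal_sub M N

lemma map_ofReal_transpose (M : Matrix a b ℝ) :
    Mᵀ.map Complex.ofReal = (M.map Complex.ofReal)ᴴ := by
  ext; simp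

@[simp] lemma map_ofReal_sum {ι : Type*} (s : Finset ι) (f : ι → Matrix a b ℝ) :
    (∑ i ∈ s, f i).map Complex.ofReal = ∑ i ∈ s, (f i).map Complex.ofReal := by
  ext; simp [Matrix.sum_apply]

lemma PosSemidef.transpose_eq_self {M : Matrix a a ℝ} (hM : M.PosSemidef) : Mᵀ = M :=
  isHermitian_iff_isSymm.mp hM.1

lemma PosSemidef.transpose_mul_mul_same [Fintype a] [Fintype b] {Z : Matrix a a ℝ}
    (hZ : Z.PosSemidef) (C : Matrix a b ℝ) : (Cᵀ * Z * C).PosSemidef := by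
  simpa only [conjTranspose_eq_transpose_of_trivial] using hZ.conjTranspose_mul_mul_same C

lemma posSemidef_sum_transpose_mul_mul {τ : Type*} [Fintype a] [Fintype b] [Fintype τ]
    {Z : Matrix a a ℝ} (hZ : Z.PosSemidef) (C : τ → Matrix a b ℝ) :
    (∑ i, (C i)ᵀ * Z * C i).PosSemidef :=
  posSemidef_sum _ fun i _ => hZ.transpose_mul_mul_same (C i)

lemma posSemidef_sub_mul_inv_mul_transpose [Fintype a] [Fintype b] [DecidableEq b]
    {Q : Matrix a a ℝ} {L : Matrix a b ℝ} {R : Matrix b b ℝ} (hR : R.PosDef)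
    (h : (fromBlocks Q L Lᵀ R).PosSemidef) : (Q - L * R⁻¹ * Lᵀ).PosSemidef := by
  have := hR.isUnit.invertible
  simpa only [conjTranspose_eq_transpose_of_trivial] using (hR.fromBlocks₂₂ Q L).mp
    (by simpa only [conjTranspose_eq_transpose_of_trivial] using h)

lemma PosSemidef.map_ofReal [Fintype a] {M : Matrix a a ℝ} (hM : M.PosSemidef) :
    (M.map Complex.ofReal).PosSemidef := by
  classical
  obtain ⟨B, rfl⟩ : ∃ B : Matrix a a ℝ, M = star B * B := by
    open scoped MatrixOrder Matrix.Norms.L2Operator in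
    exact CStarAlgebra.nonneg_iff_eq_star_mul_self.mp hM.nonneg
  rw [star_eq_conjTranspose, conjTranspose_eq_transpose_of_trivial, map_ofReal_mul,
    map_ofReal_transpose]
  exact posSemidef_conjTranspose_mul_self _

lemma PosDef.map_ofReal [Fintype a] [DecidableEq a] {M : Matrix a a ℝ} (hM : M.PosDef) :
    (M.map Complex.ofReal).PosDef := by
  rw [hM.posSemidef.map_ofReal.posDef_iff_det_ne_zero]
  have hdet : (M.map Complex.ofReal).det = M.det := (RingHom.map_det Complex.ofRealHom M).symm
  exact hdet ▸ Complex.ofReal_ne_zero.mpr hM.det_pos.ne'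

lemma PosSemidef.mulVec_eq_zero_of_sub [Fintype a] {P P₁ : Matrix a a ℂ} (h₁ : P₁.PosSemidef)
    (h : (P - P₁).PosSemidef) {z : a → ℂ} (hz : P *ᵥ z = 0) : P₁ *ᵥ z = 0 := by
  have hsum : star z ⬝ᵥ (P₁ *ᵥ z) + star z ⬝ᵥ ((P - P₁) *ᵥ z) = 0 := by
    rw [← dotProduct_add, ← add_mulVec, add_sub_cancel, hz, dotProduct_zero]
  rw [← h₁.dotProduct_mulVec_zero_iff]
  exact ((add_eq_zero_iff_of_nonneg (h₁.dotProduct_mulVec_nonneg z)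
    (h.dotProduct_mulVec_nonneg z)).mp hsum).1

lemma PosDef.mulVec_eq_zero_of_conjTranspose_mul_mul [Fintype a] [Fintype b]
    {S : Matrix b b ℂ} (hS : S.PosDef) {C : Matrix b a ℂ} {z : a → ℂ}
    (h : (Cᴴ * S * C) *ᵥ z = 0) : C *ᵥ z = 0 := by
  by_contra hCz
  refine (hS.dotProduct_mulVec_pos hCz).ne' ?_
  rw [star_mulVec, ← dotProduct_mulVec, mulVec_mulVec, mulVec_mulVec, h, dotProduct_zero]

lemma exists_mulVec_eq_smul_of_mem_spectrum [Fintype a] [DecidableEq a] {M : Matrix a a ℂ}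
    {μ : ℂ} (hμ : μ ∈ spectrum ℂ M) : ∃ z ≠ 0, M *ᵥ z = μ • z := by
  rw [← spectrum_toLin', ← Module.End.hasEigenvalue_iff_mem_spectrum] at hμ
  obtain ⟨z, hz⟩ := hμ.exists_hasEigenvector
  exact ⟨z, hz.2, by simpa using hz.apply_eq_smul⟩

end Matrix

lemma IsStableMatrix.of_lyapunov {n : ℕ} {M X P : Matrix (Fin n) (Fin n) ℝ}
    (hX : X.PosSemidef) (hP : P.PosSemidef) (hLyap : Mᵀ * X + X * M + P = 0)
    (hdet : Detectable P M) : IsStableMatrix M := by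
  intro μ hμ
  by_contra! hre
  obtain ⟨z, hz, hMz⟩ := exists_mulVec_eq_smul_of_mem_spectrum hμ
  refine hz (hdet μ z hre (by rw [sub_mulVec, hMz, smul_mulVec, one_mulVec, sub_self]) ?_)
  set q := star z ⬝ᵥ (X.map Complex.ofReal *ᵥ z)
  have hform : star z ⬝ᵥ (P.map Complex.ofReal *ᵥ z) + (star μ + μ) * q = 0 := by
    have h := congrArg (fun N => star z ⬝ᵥ (N.map Complex.ofReal *ᵥ z)) hLyap
    simp only [map_ofReal_add, map_ofReal_mul, map_ofReal_transpose, add_mulVec,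
      dotProduct_add, ← mulVec_mulVec, Matrix.map_zero _ Complex.ofReal_zero, zero_mulVec,
      dotProduct_zero] at h
    rw [dotProduct_mulVec, ← star_mulVec, hMz, star_smul, smul_dotProduct, mulVec_smul,
      dotProduct_smul] at h
    rw [← h]
    simp only [smul_eq_mul]
    ring
  have hre' : 0 ≤ star μ + μ := by
    rw [Complex.nonneg_iff]
    simp only [Complex.add_re, Complex.add_im, Complex.star_def, Complex.conj_re,
      Complex.conj_im]
    constructor <;> linarith
  rw [← hP.map_ofReal.dotProduct_mulVec_zero_iff]
  exact ((add_eq_zero_iff_of_nonneg (hP.map_ofReal.dotProduct_mulVec_nonneg z)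
    (mul_nonneg hre' (hX.map_ofReal.dotProduct_mulVec_nonneg z))).mp hform).1

lemma Detectable.of_ker {p q n : ℕ} {C : Matrix (Fin p) (Fin n) ℝ}
    {P : Matrix (Fin q) (Fin n) ℝ} {A M : Matrix (Fin n) (Fin n) ℝ} (h : Detectable C A)
    (hP : ∀ z, P.map Complex.ofReal *ᵥ z = 0 →
      C.map Complex.ofReal *ᵥ z = 0 ∧ M.map Complex.ofReal *ᵥ z = A.map Complex.ofReal *ᵥ z) :
    Detectable P M := by
  intro μ z hμ hMz hPz
  obtain ⟨hCz, hMA⟩ := hP z hPz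
  exact h μ z hμ (by rwa [sub_mulVec, ← hMA, ← sub_mulVec]) hCz

section SCARE

variable {n m r : ℕ} {A Q : Matrix (Fin n) (Fin n) ℝ} {B L : Matrix (Fin n) (Fin m) ℝ}
  {R : Matrix (Fin m) (Fin m) ℝ} {A0 : Fin r → Matrix (Fin n) (Fin n) ℝ}
  {B0 : Fin r → Matrix (Fin n) (Fin m) ℝ} {X Y : Matrix (Fin n) (Fin n) ℝ}

lemma posDef_Rc (hR : R.PosDef) (hX : X.PosSemidef) : (Rc R B0 X).PosDef :=
  hR.add_posSemidef (posSemidef_sum_transpose_mul_mul hX B0)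

lemma transpose_Rc (hR : Rᵀ = R) (hX : Xᵀ = X) : (Rc R B0 X)ᵀ = Rc R B0 X := by
  simp only [Rc, Pi22, transpose_add, transpose_sum, transpose_mul, transpose_transpose, hR, hX,
    Matrix.mul_assoc]

lemma gainCost_Qc_Lc_Rc (hX : Xᵀ = X) (K : Matrix (Fin m) (Fin n) ℝ) :
    gainCost (Qc Q A0 X) (Lc L A0 B0 X) (Rc R B0 X) K =
      gainCost Q L R K + ∑ i, (A0 i - B0 i * K)ᵀ * X * (A0 i - B0 i * K) := by
  rw [Qc, Lc, Rc, gainCost_add, Pi11, Pi12, Pi22, gainCost_sum A0 B0 hX]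

lemma gainCost_Qc_Lc_Rc_eq_add (hX : Xᵀ = X) (hY : Yᵀ = Y) (K : Matrix (Fin m) (Fin n) ℝ) :
    gainCost (Qc Q A0 X) (Lc L A0 B0 X) (Rc R B0 X) K =
      gainCost (Qc Q A0 Y) (Lc L A0 B0 Y) (Rc R B0 Y) K +
        ∑ i, (A0 i - B0 i * K)ᵀ * (X - Y) * (A0 i - B0 i * K) := by
  rw [gainCost_Qc_Lc_Rc hX, gainCost_Qc_Lc_Rc hY, add_assoc, ← Finset.sum_add_distrib]
  congr 1
  refine Finset.sum_congr rfl fun i _ => ?_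
  rw [← Matrix.add_mul, ← Matrix.mul_add, add_sub_cancel]

lemma posSemidef_Hc_sub (hR : R.PosDef) (hY : Y.PosSemidef) :
    (Hc Q L R A0 B0 Y - (Q - L * R⁻¹ * Lᵀ)).PosSemidef := by
  have hRY := (posDef_Rc (B0 := B0) hR hY).det_pos.ne'.isUnit
  have hRYT := transpose_Rc (B0 := B0) hR.posSemidef.transpose_eq_self hY.transpose_eq_self
  set K₀ := (Rc R B0 Y)⁻¹ * (Lc L A0 B0 Y)ᵀ
  have hHc : Hc Q L R A0 B0 Y = gainCost (Qc Q A0 Y) (Lc L A0 B0 Y) (Rc R B0 Y) K₀ := by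
    rw [gainCost_eq_schur_add hRYT hRY (F := 0)
      (by rw [add_zero]; exact mul_nonsing_inv_cancel_left _ _ hRY)]
    simp only [Hc, transpose_zero, Matrix.zero_mul, add_zero]
  rw [hHc, gainCost_Qc_Lc_Rc hY.transpose_eq_self, gainCost_eq_schur_add
    hR.posSemidef.transpose_eq_self hR.det_pos.ne'.isUnit (F := R * K₀ - Lᵀ) (by abel),
    add_assoc, add_sub_cancel_left]
  exact (hR.inv.posSemidef.transpose_mul_mul_same _).add (posSemidef_sum_transpose_mul_mul hY _)

lemma scareRes_eq_lyapunov (hR : Rᵀ = R) (hX : Xᵀ = X) (hY : Yᵀ = Y)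
    (hRX : IsUnit (Rc R B0 X).det) (hRY : IsUnit (Rc R B0 Y).det) {K Kₓ : Matrix (Fin m) (Fin n) ℝ}
    (hK : K = (Rc R B0 Y)⁻¹ * ((Lc L A0 B0 Y)ᵀ + Bᵀ * X))
    (hKₓ : Kₓ = (Rc R B0 X)⁻¹ * (X * B + Lc L A0 B0 X)ᵀ) :
    scareRes A B Q L R A0 B0 X = (A - B * K)ᵀ * X + X * (A - B * K) +
      (Hc Q L R A0 B0 Y + (Bᵀ * X)ᵀ * (Rc R B0 Y)⁻¹ * (Bᵀ * X) +
        ((Kₓ - K)ᵀ * Rc R B0 Y * (Kₓ - K) +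
          ∑ i, (A0 i - B0 i * Kₓ)ᵀ * (X - Y) * (A0 i - B0 i * Kₓ))) := by
  have hRYT := transpose_Rc (B0 := B0) hR hY
  have hXB : (X * B)ᵀ = Bᵀ * X := by rw [transpose_mul, hX]
  have hKₓ' : Rc R B0 X * Kₓ = (X * B + Lc L A0 B0 X)ᵀ := by
    rw [hKₓ, mul_nonsing_inv_cancel_left _ _ hRX]
  have hK' : Rc R B0 Y * K = (X * B + Lc L A0 B0 Y)ᵀ := by
    rw [hK, mul_nonsing_inv_cancel_left _ _ hRY, transpose_add, hXB, add_comm]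
  have h_opt : scareRes A B Q L R A0 B0 X = (A - B * Kₓ)ᵀ * X + X * (A - B * Kₓ) +
      gainCost (Qc Q A0 X) (Lc L A0 B0 X) (Rc R B0 X) Kₓ := by
    rw [closedLoop_add_gainCost _ _ _ _ _ _ _ hX, gainCost_of_mul_eq hKₓ', hKₓ, scareRes,
      add_sub_assoc, Matrix.mul_assoc]
  have h_mixed : (A - B * Kₓ)ᵀ * X + X * (A - B * Kₓ) +
      gainCost (Qc Q A0 Y) (Lc L A0 B0 Y) (Rc R B0 Y) Kₓ =
        (A - B * K)ᵀ * X + X * (A - B * K) + gainCost (Qc Q A0 Y) (Lc L A0 B0 Y) (Rc R B0 Y) K +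
          (Kₓ - K)ᵀ * Rc R B0 Y * (Kₓ - K) := by
    rw [closedLoop_add_gainCost _ _ _ _ _ _ _ hX, closedLoop_add_gainCost _ _ _ _ _ _ _ hX,
      gainCost_eq_add_of_mul_eq hRYT hK' Kₓ, ← add_assoc]
  have h_Hc : gainCost (Qc Q A0 Y) (Lc L A0 B0 Y) (Rc R B0 Y) K =
      Hc Q L R A0 B0 Y + (Bᵀ * X)ᵀ * (Rc R B0 Y)⁻¹ * (Bᵀ * X) := by
    rw [gainCost_eq_schur_add hRYT hRY (by rw [hK, mul_nonsing_inv_cancel_left _ _ hRY]), Hc]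
  rw [h_opt, gainCost_Qc_Lc_Rc_eq_add hX hY, ← add_assoc, h_mixed, h_Hc]
  abel

lemma exists_lyapunov_of_scareRes_eq_zero (hR : R.PosDef)
    (hsign : (fromBlocks Q L Lᵀ R).PosSemidef) (hY : Y.PosSemidef) (hXY : (X - Y).PosSemidef)
    (hsol : scareRes A B Q L R A0 B0 X = 0) :
    ∃ P : Matrix (Fin n) (Fin n) ℝ, P.PosSemidef ∧
      (Ac A B L R A0 B0 Y - Gc B R B0 Y * X)ᵀ * X + X * (Ac A B L R A0 B0 Y - Gc B R B0 Y * X) +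
        P = 0 ∧
      ∀ z, P.map Complex.ofReal *ᵥ z = 0 →
        (Q - L * R⁻¹ * Lᵀ).map Complex.ofReal *ᵥ z = 0 ∧ (Bᵀ * X).map Complex.ofReal *ᵥ z = 0 := by
  have hX : X.PosSemidef := by simpa using hY.add hXY
  have hRX := posDef_Rc (B0 := B0) hR hX
  have hRY := posDef_Rc (B0 := B0) hR hY
  set K := (Rc R B0 Y)⁻¹ * ((Lc L A0 B0 Y)ᵀ + Bᵀ * X) with hK
  set Kₓ := (Rc R B0 X)⁻¹ * (X * B + Lc L A0 B0 X)ᵀ with hKₓ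
  have hM : Ac A B L R A0 B0 Y - Gc B R B0 Y * X = A - B * K := by
    simp only [Ac, Gc, K, Matrix.mul_add, Matrix.mul_assoc, sub_sub]
  set H₀ := Q - L * R⁻¹ * Lᵀ
  set W := (Bᵀ * X)ᵀ * (Rc R B0 Y)⁻¹ * (Bᵀ * X)
  set E := (Kₓ - K)ᵀ * Rc R B0 Y * (Kₓ - K) +
    ∑ i, (A0 i - B0 i * Kₓ)ᵀ * (X - Y) * (A0 i - B0 i * Kₓ)
  have hH₀ : H₀.PosSemidef := posSemidef_sub_mul_inv_mul_transpose hR hsign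
  have hHc : (Hc Q L R A0 B0 Y - H₀).PosSemidef := posSemidef_Hc_sub hR hY
  have hW : W.PosSemidef := hRY.inv.posSemidef.transpose_mul_mul_same _
  have hE : E.PosSemidef :=
    (hRY.posSemidef.transpose_mul_mul_same _).add (posSemidef_sum_transpose_mul_mul hXY _)
  refine ⟨Hc Q L R A0 B0 Y + W + E, ?_, ?_, fun z hz => ⟨?_, ?_⟩⟩
  · simpa using ((hH₀.add hHc).add hW).add hE
  · rw [hM, ← hsol, scareRes_eq_lyapunov hR.posSemidef.transpose_eq_self hX.transpose_eq_self
      hY.transpose_eq_self hRX.det_pos.ne'.isUnit hRY.det_pos.ne'.isUnit hK hKₓ]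
  · have h : (Hc Q L R A0 B0 Y + W + E - H₀).PosSemidef := by
      rw [show Hc Q L R A0 B0 Y + W + E - H₀ = Hc Q L R A0 B0 Y - H₀ + W + E by abel]
      exact (hHc.add hW).add hE
    exact hH₀.map_ofReal.mulVec_eq_zero_of_sub (by simpa using h.map_ofReal) hz
  · have h : (Hc Q L R A0 B0 Y + W + E - W).PosSemidef := by
      rw [show Hc Q L R A0 B0 Y + W + E - W = H₀ + (Hc Q L R A0 B0 Y - H₀) + E by abel]
      exact (hH₀.add hHc).add hE
    have hWz := hW.map_ofReal.mulVec_eq_zero_of_sub (by simpa using h.map_ofReal) hz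
    rw [map_ofReal_mul, map_ofReal_mul, map_ofReal_transpose] at hWz
    exact hRY.inv.map_ofReal.mulVec_eq_zero_of_conjTranspose_mul_mul hWz

lemma Ac_sub_Gc_mul_mulVec_eq (hker : KernelCondition Q L R A0) {z : Fin n → ℂ}
    (hz : (Q - L * R⁻¹ * Lᵀ).map Complex.ofReal *ᵥ z = 0)
    (hBz : (Bᵀ * X).map Complex.ofReal *ᵥ z = 0) :
    (Ac A B L R A0 B0 Y - Gc B R B0 Y * X).map Complex.ofReal *ᵥ z =
      A.map Complex.ofReal *ᵥ z := by
  obtain ⟨hLz, hA0z⟩ := hker z hz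
  have hLcz : (Lc L A0 B0 Y)ᵀ.map Complex.ofReal *ᵥ z = 0 := by
    simp only [Lc, Pi12, transpose_add, transpose_sum, transpose_mul, transpose_transpose,
      map_ofReal_add, map_ofReal_sum, map_ofReal_mul, add_mulVec, sum_mulVec, ← mulVec_mulVec,
      hLz, hA0z, mulVec_zero, Finset.sum_const_zero, add_zero]
  simp only [map_ofReal_mul, ← mulVec_mulVec] at hBz
  simp only [Ac, Gc, map_ofReal_sub, map_ofReal_mul, sub_mulVec, ← mulVec_mulVec, hLcz, hBz,
    mulVec_zero, sub_zero]

end SCARE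

theorem stmt8_general (n m r : ℕ)
    (A Q : Matrix (Fin n) (Fin n) ℝ) (B L : Matrix (Fin n) (Fin m) ℝ)
    (R : Matrix (Fin m) (Fin m) ℝ)
    (A0 : Fin r → Matrix (Fin n) (Fin n) ℝ) (B0 : Fin r → Matrix (Fin n) (Fin m) ℝ)
    (hRpd : R.PosDef) (hsign : (fromBlocks Q L Lᵀ R).PosSemidef)
    (hker : KernelCondition Q L R A0)
    (hdet : Detectable (Q - L * R⁻¹ * Lᵀ) A)
    (Xt Xs : Matrix (Fin n) (Fin n) ℝ)
    (hXtpsd : Xt.PosSemidef) (hle : (Xs - Xt).PosSemidef)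
    (hsol : scareRes A B Q L R A0 B0 Xs = 0) :
    IsStableMatrix (Ac A B L R A0 B0 Xt - Gc B R B0 Xt * Xs) := by
  have hXs : Xs.PosSemidef := by simpa using hXtpsd.add hle
  obtain ⟨P, hP, hLyap, hPker⟩ := exists_lyapunov_of_scareRes_eq_zero hRpd hsign hXtpsd hle hsol
  refine IsStableMatrix.of_lyapunov hXs hP hLyap (hdet.of_ker fun z hz => ?_)
  obtain ⟨hH₀z, hBz⟩ := hPker z hz
  exact ⟨hH₀z, Ac_sub_Gc_mul_mulVec_eq hker hH₀z hBz⟩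

/-- Under the sign conditions, the kernel condition and detectability of
(Q − LR⁻¹Lᵀ, A), if 0 ⪯ X̃ ⪯ X_* and 𝓡(X_*) = 0, then A_c(X̃) − G_c(X̃)X_* is stable. -/
theorem stmt8 (n m r : ℕ) (hn : 0 < n) (hm : 0 < m) (hr : 0 < r)
    (A Q : Matrix (Fin n) (Fin n) ℝ) (B L : Matrix (Fin n) (Fin m) ℝ)
    (R : Matrix (Fin m) (Fin m) ℝ)
    (A0 : Fin r → Matrix (Fin n) (Fin n) ℝ) (B0 : Fin r → Matrix (Fin n) (Fin m) ℝ)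
    (hQ : Q.IsHermitian) (hRsymm : R.IsHermitian)
    (hRpd : R.PosDef) (hsign : (fromBlocks Q L Lᵀ R).PosSemidef)
    (hker : KernelCondition Q L R A0)
    (hdet : Detectable (Q - L * R⁻¹ * Lᵀ) A)
    (Xt Xs : Matrix (Fin n) (Fin n) ℝ)
    (hXt : Xt.IsHermitian) (hXs : Xs.IsHermitian)
    (hXtpsd : Xt.PosSemidef) (hle : (Xs - Xt).PosSemidef)
    (hsol : scareRes A B Q L R A0 B0 Xs = 0) :
    IsStableMatrix (Ac A B L R A0 B0 Xt - Gc B R B0 Xt * Xs) :=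
  stmt8_general n m r A Q B L R A0 B0 hRpd hsign hker hdet Xt Xs hXtpsd hle hsol
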